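/- arXiv:2212.12433 — 6 statements merged into one kernel-verified Lean document; each statement's English description precedes it below -/
import Mathlib

section
/- Let S be a gr-C-2^A-secondary submodule of M and let I = ⊕_{g∈G} I_g and J = ⊕_{g∈G} J_g be graded ideals of Γ (where I_g = I ∩ Γ_g and J_g = J ∩ Γ_g). Then for every α, β ∈ G and every graded submodule L of M with I_α J_β S ⊆ L, either I_α S ⊆ L, or J_β S ⊆ L, or every product ab with a ∈ I_α and b ∈ J_β lies in Gr(Ann_Γ(S)). -/
open Pointwise DirectSum

section Preliminaries

variable {G : Type*} [AddGroup G] [DecidableEq G]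
variable {Γ : Type*} [CommRing Γ]
variable {M : Type*} [AddCommGroup M] [Module Γ M]

/-- `x` lies in the graded radical `Gr I`: for homogeneous `x` this is the defining
condition that some positive power of `x` lies in `I`. -/
def grMem (I : Ideal Γ) (x : Γ) : Prop := ∃ n : ℕ, 0 < n ∧ x ^ n ∈ I

variable (𝒜 : G → AddSubgroup Γ) (ℳ : G → AddSubgroup M)
variable [GradedRing 𝒜] [DirectSum.Decomposition ℳ] [SetLike.GradedSMul 𝒜 ℳ]

/-- A graded submodule: closed under taking homogeneous components. -/
def IsGradedSubmodule (S : Submodule Γ M) : Prop :=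
  ∀ (g : G) ⦃x : M⦄, x ∈ S → (DirectSum.decompose ℳ x g : M) ∈ S

/-- A graded ideal: closed under taking homogeneous components. -/
def IsGradedIdeal (I : Ideal Γ) : Prop :=
  ∀ (g : G) ⦃x : Γ⦄, x ∈ I → (DirectSum.decompose 𝒜 x g : Γ) ∈ I

/-- A graded classical 2-absorbing secondary (gr-C-2^A-secondary) submodule:
a nonzero graded submodule `S` such that whenever `r, s` are homogeneous and `L` is a
graded submodule with `r*s • S ⊆ L`, either `r • S ⊆ L`, or `s • S ⊆ L`, or
`r*s ∈ Gr(Ann S)`. -/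
def IsGrC2ASecondary (S : Submodule Γ M) : Prop :=
  S ≠ ⊥ ∧ IsGradedSubmodule ℳ S ∧
    ∀ r s : Γ, SetLike.IsHomogeneousElem 𝒜 r → SetLike.IsHomogeneousElem 𝒜 s →
      ∀ L : Submodule Γ M, IsGradedSubmodule ℳ L →
        (r * s) • S ≤ L →
          r • S ≤ L ∨ s • S ≤ L ∨ grMem S.annihilator (r * s)

end Preliminaries

/-! The elements `r` with `r • S ≤ L` form an ideal, the colon ideal `L.colon S`. An additive
subgroup `H` of `Γ` not contained in an additive subgroup `K` is generated by `H \ K`, since for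
`h ∈ H ∩ K` and `h₀ ∈ H \ K` we have `h = -h₀ + (h₀ + h)` with `h₀ + h ∉ K`. So if neither
`I_α` nor `J_β` lies in the colon ideal, each is additively generated by its elements outside it;
for those the secondary property forces `a * b ∈ √(Ann S)`, and biadditivity of multiplication
extends this to all of `I_α × J_β`. -/

namespace AddSubgroup

variable {A : Type*} [AddGroup A]

theorem closure_sdiff_eq_of_not_le {H K : AddSubgroup A} (hHK : ¬ H ≤ K) :
    closure ((H : Set A) \ K) = H := by
  refine le_antisymm ((closure_le H).2 Set.sdiff_subset) fun h hh ↦ ?_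
  have hmem {x : A} (hx : x ∈ H) (hxK : x ∉ K) : x ∈ closure ((H : Set A) \ K) :=
    subset_closure ⟨hx, hxK⟩
  obtain ⟨h₀, hh₀, hh₀K⟩ := SetLike.not_le_iff_exists.1 hHK
  by_cases hhK : h ∈ K
  · have hsum : h₀ + h ∉ K := fun h' ↦ hh₀K <| add_sub_cancel_right h₀ h ▸ K.sub_mem h' hhK
    simpa using add_mem (neg_mem (hmem hh₀ hh₀K)) (hmem (H.add_mem hh₀ hh) hsum)
  · exact hmem hh hhK

theorem mul_mem_of_mem_closure {R : Type*} [NonUnitalNonAssocRing R] {K : AddSubgroup R} {s t : Set R}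
    (hst : ∀ a ∈ s, ∀ b ∈ t, a * b ∈ K) {a b : R} (ha : a ∈ closure s)
    (hb : b ∈ closure t) : a * b ∈ K := by
  have hs : ∀ b ∈ t, closure s ≤ K.comap (AddMonoidHom.mulRight b) := fun b hb ↦
    (closure_le _).2 fun a ha ↦ hst a ha b hb
  have ht : closure t ≤ K.comap (AddMonoidHom.mulLeft a) :=
    (closure_le _).2 fun b hb ↦ hs b hb ha
  exact ht hb

end AddSubgroup

theorem grMem_iff_mem_radical {Γ : Type*} [CommRing Γ] {I : Ideal Γ} {x : Γ} :
    grMem I x ↔ x ∈ I.radical := by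
  refine ⟨fun ⟨n, _, hn⟩ ↦ ⟨n, hn⟩, fun ⟨n, hn⟩ ↦ ?_⟩
  rcases n.eq_zero_or_pos with rfl | hn₀
  · refine ⟨1, one_pos, ?_⟩
    rw [pow_one, ← mul_one x]
    exact I.mul_mem_left x (by simpa using hn)
  · exact ⟨n, hn₀, hn⟩

variable {G : Type*} [AddGroup G] [DecidableEq G]
variable {Γ : Type*} [CommRing Γ]
variable {M : Type*} [AddCommGroup M] [Module Γ M]
variable (𝒜 : G → AddSubgroup Γ) (ℳ : G → AddSubgroup M)
variable [GradedRing 𝒜] [DirectSum.Decomposition ℳ] [SetLike.GradedSMul 𝒜 ℳ]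

theorem stmt0 (S : Submodule Γ M) (hS : IsGrC2ASecondary 𝒜 ℳ S)
    (I J : Ideal Γ)
    (α β : G) (L : Submodule Γ M) (hL : IsGradedSubmodule ℳ L)
    (h : ∀ a ∈ I, a ∈ 𝒜 α → ∀ b ∈ J, b ∈ 𝒜 β → (a * b) • S ≤ L) :
    (∀ a ∈ I, a ∈ 𝒜 α → a • S ≤ L) ∨
    (∀ b ∈ J, b ∈ 𝒜 β → b • S ≤ L) ∨
    (∀ a ∈ I, a ∈ 𝒜 α → ∀ b ∈ J, b ∈ 𝒜 β → grMem S.annihilator (a * b)) := by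
  let T := (L.colon (S : Set M)).toAddSubgroup
  have hT (r : Γ) : r ∈ T ↔ r • S ≤ L := Submodule.mem_colon_iff_le
  let A := I.toAddSubgroup ⊓ 𝒜 α
  let B := J.toAddSubgroup ⊓ 𝒜 β
  by_cases hAT : A ≤ T
  · exact .inl fun a haI haα ↦ (hT a).1 (hAT ⟨haI, haα⟩)
  by_cases hBT : B ≤ T
  · exact .inr <| .inl fun b hbJ hbβ ↦ (hT b).1 (hBT ⟨hbJ, hbβ⟩)
  have hbad : ∀ a ∈ (A : Set Γ) \ T, ∀ b ∈ (B : Set Γ) \ T,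
      a * b ∈ S.annihilator.radical.toAddSubgroup := by
    rintro a ⟨⟨haI, haα⟩, haT⟩ b ⟨⟨hbJ, hbβ⟩, hbT⟩
    rcases hS.2.2 a b ⟨α, haα⟩ ⟨β, hbβ⟩ L hL (h a haI haα b hbJ hbβ) with ha | hb | hab
    · exact absurd ((hT a).2 ha) haT
    · exact absurd ((hT b).2 hb) hbT
    · exact grMem_iff_mem_radical.1 hab
  refine .inr <| .inr fun a haI haα b hbJ hbβ ↦ grMem_iff_mem_radical.2 ?_
  refine AddSubgroup.mul_mem_of_mem_closure hbad ?_ ?_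
  · rw [AddSubgroup.closure_sdiff_eq_of_not_le hAT]; exact ⟨haI, haα⟩
  · rw [AddSubgroup.closure_sdiff_eq_of_not_le hBT]; exact ⟨hbJ, hbβ⟩
end

section
/- Let S be a gr-C-2^A-secondary submodule of M. Then for all homogeneous elements a, b ∈ Γ, either abS = aS, or abS = bS, or ab ∈ Gr(Ann_Γ(S)). -/
open Pointwise DirectSum

variable {G : Type*} [AddGroup G] [DecidableEq G]
variable {Γ : Type*} [CommRing Γ]
variable {M : Type*} [AddCommGroup M] [Module Γ M]
variable (𝒜 : G → AddSubgroup Γ) (ℳ : G → AddSubgroup M)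
variable [GradedRing 𝒜] [DirectSum.Decomposition ℳ] [SetLike.GradedSMul 𝒜 ℳ]

section GradedSMul

variable {ι A M σA σM : Type*} [DecidableEq ι] [AddLeftCancelMonoid ι]
variable [Semiring A] [AddCommMonoid M] [Module A M]
variable [SetLike σA A] [SetLike σM M] [AddSubmonoidClass σM M]
variable (𝒜 : ι → σA) (ℳ : ι → σM) [DirectSum.Decomposition ℳ] [SetLike.GradedSMul 𝒜 ℳ]

theorem DirectSum.coe_decompose_smul_add_of_left_mem {i : ι} {c : A} (hc : c ∈ 𝒜 i) (x : M)
    (j : ι) : (decompose ℳ (c • x) (i + j) : M) = c • (decompose ℳ x j : M) := by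
  induction x using DirectSum.Decomposition.inductionOn ℳ with
  | zero => simp
  | @homogeneous k m =>
    obtain ⟨m, hm⟩ := m
    have hcm : c • m ∈ ℳ (i + k) := SetLike.GradedSMul.smul_mem hc hm
    rcases eq_or_ne k j with rfl | hne
    · rw [decompose_of_mem_same ℳ hm, decompose_of_mem_same ℳ hcm]
    · rw [decompose_of_mem_ne ℳ hm hne, decompose_of_mem_ne ℳ hcm (by simpa using hne),
        smul_zero]
  | add x y hx hy =>
    simp only [smul_add, decompose_add, add_apply, AddMemClass.coe_add, hx, hy]

end GradedSMul

theorem Submodule.mul_smul_le_smul_left {R N : Type*} [CommSemiring R] [AddCommMonoid N]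
    [Module R N] (a b : R) (S : Submodule R N) : (a * b) • S ≤ a • S := by
  rw [mul_smul]
  exact smul_mono_right a (smul_le_self_of_tower b S)

omit [GradedRing 𝒜] in
theorem IsGradedSubmodule.smul {S : Submodule Γ M} (hS : IsGradedSubmodule ℳ S) {c : Γ}
    (hc : SetLike.IsHomogeneousElem 𝒜 c) : IsGradedSubmodule ℳ (c • S) := by
  obtain ⟨i, hc⟩ := hc
  rintro g _ ⟨y, hy, rfl⟩
  obtain ⟨j, rfl⟩ : ∃ j, g = i + j := ⟨-i + g, (add_neg_cancel_left i g).symm⟩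
  change (decompose ℳ (c • y) (i + j) : M) ∈ c • S
  rw [DirectSum.coe_decompose_smul_add_of_left_mem 𝒜 ℳ hc]
  exact Submodule.smul_mem_pointwise_smul _ _ _ (hS j hy)

/-- If `S` is a gr-C-2^A-secondary submodule of `M`, then for all homogeneous `a, b`,
either `a*b • S = a • S`, or `a*b • S = b • S`, or `a*b ∈ Gr(Ann S)`. -/
theorem stmt1 (S : Submodule Γ M) (hS : IsGrC2ASecondary 𝒜 ℳ S)
    (a b : Γ) (ha : SetLike.IsHomogeneousElem 𝒜 a) (hb : SetLike.IsHomogeneousElem 𝒜 b) :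
    (a * b) • S = a • S ∨ (a * b) • S = b • S ∨ grMem S.annihilator (a * b) := by
  obtain ⟨-, hS_graded, hS_absorbing⟩ := hS
  have hab_graded : IsGradedSubmodule ℳ ((a * b) • S) := hS_graded.smul 𝒜 ℳ (ha.mul hb)
  rcases hS_absorbing a b ha hb _ hab_graded le_rfl with h | h | h
  · exact .inl (le_antisymm (S.mul_smul_le_smul_left a b) h)
  · exact .inr (.inl (le_antisymm (mul_comm a b ▸ S.mul_smul_le_smul_left b a) h))
  · exact .inr (.inr h)
end

section
/- Let S be a gr-C-2^A-secondary submodule of M. Then Ann_Γ(S) is a gr-2^A-primary ideal of Γ, i.e., Ann_Γ(S) is a proper ideal and for all homogeneous r, s, t ∈ Γ with rst ∈ Ann_Γ(S), either rs ∈ Ann_Γ(S), or rt ∈ Gr(Ann_Γ(S)), or st ∈ Gr(Ann_Γ(S)). -/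
/-! For homogeneous `s`, the `s`-torsion submodule `L = {m | s • m = 0}` is graded, and
`r • S ≤ L` says exactly that `s * r ∈ Ann S`. So `r * s * t ∈ Ann S` means `(r * t) • S ≤ L`,
and the secondary property applied to `r`, `t`, `L` gives `r * s ∈ Ann S`, `s * t ∈ Ann S`, or
`r * t ∈ Gr (Ann S)`. -/

open Pointwise DirectSum

namespace Submodule

theorem pointwise_smul_le_iff {α R M : Type*} [Monoid α] [Semiring R] [AddCommMonoid M]
    [Module R M] [DistribMulAction α M] [SMulCommClass α R M] {a : α} {S L : Submodule R M} :
    a • S ≤ L ↔ ∀ x ∈ S, a • x ∈ L := by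
  rw [pointwise_smul_def, map_le_iff_le_comap]
  rfl

theorem smul_le_torsionBy_iff {R M : Type*} [CommSemiring R] [AddCommMonoid M] [Module R M]
    {a s : R} {S : Submodule R M} : a • S ≤ torsionBy R M s ↔ s * a ∈ S.annihilator := by
  simp only [pointwise_smul_le_iff, mem_torsionBy_iff, mem_annihilator, mul_smul]

end Submodule

section GradedSMul

variable {ι A M σA σM : Type*} [DecidableEq ι] [AddLeftCancelMonoid ι] [Monoid A]
  [AddCommMonoid M] [DistribMulAction A M] [SetLike σA A] [SetLike σM M]
  [AddSubmonoidClass σM M] (𝒜 : ι → σA) (ℳ : ι → σM) [Decomposition ℳ]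
  [SetLike.GradedSMul 𝒜 ℳ]

theorem coe_decompose_smul_of_left_mem {a : A} {i : ι} (ha : a ∈ 𝒜 i) (x : M) (g : ι) :
    (decompose ℳ (a • x) (i + g) : M) = a • (decompose ℳ x g : M) := by
  induction x using DirectSum.Decomposition.inductionOn ℳ with
  | zero => simp
  | @homogeneous h m =>
    have hax : a • (m : M) ∈ ℳ (i + h) := SetLike.GradedSMul.smul_mem ha m.2
    by_cases hgh : g = h
    · subst hgh
      rw [decompose_of_mem_same ℳ m.2, decompose_of_mem_same ℳ hax]
    · rw [decompose_of_mem_ne ℳ m.2 (Ne.symm hgh),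
        decompose_of_mem_ne ℳ hax (fun hc => hgh (add_left_cancel hc).symm), smul_zero]
  | add x y hx hy =>
    simp only [smul_add, decompose_add, DirectSum.add_apply, AddMemClass.coe_add, hx, hy]

end GradedSMul

section Torsion

variable {G Γ M : Type*} [AddGroup G] [DecidableEq G] [CommRing Γ] [AddCommGroup M]
  [Module Γ M] (𝒜 : G → AddSubgroup Γ) (ℳ : G → AddSubgroup M) [Decomposition ℳ]
  [SetLike.GradedSMul 𝒜 ℳ]

theorem isGradedSubmodule_torsionBy {s : Γ} {i : G} (hs : s ∈ 𝒜 i) :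
    IsGradedSubmodule ℳ (Submodule.torsionBy Γ M s) := by
  intro g x hx
  rw [Submodule.mem_torsionBy_iff] at hx ⊢
  rw [← coe_decompose_smul_of_left_mem 𝒜 ℳ hs, hx, decompose_zero, DirectSum.zero_apply,
    ZeroMemClass.coe_zero]

end Torsion

variable {G : Type*} [AddGroup G] [DecidableEq G]
variable {Γ : Type*} [CommRing Γ]
variable {M : Type*} [AddCommGroup M] [Module Γ M]
variable (𝒜 : G → AddSubgroup Γ) (ℳ : G → AddSubgroup M)
variable [GradedRing 𝒜] [DirectSum.Decomposition ℳ] [SetLike.GradedSMul 𝒜 ℳ]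

/-- If `S` is a gr-C-2^A-secondary submodule of `M`, then `Ann S` is a
gr-2^A-primary ideal of `Γ`. -/
theorem stmt2 (S : Submodule Γ M) (hS : IsGrC2ASecondary 𝒜 ℳ S) :
    S.annihilator ≠ ⊤ ∧
      ∀ r s t : Γ, SetLike.IsHomogeneousElem 𝒜 r → SetLike.IsHomogeneousElem 𝒜 s →
        SetLike.IsHomogeneousElem 𝒜 t → r * s * t ∈ S.annihilator →
          r * s ∈ S.annihilator ∨ grMem S.annihilator (r * t) ∨
            grMem S.annihilator (s * t) := by
  obtain ⟨hS_ne_bot, -, hS_absorbing⟩ := hS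
  refine ⟨fun h => hS_ne_bot (Submodule.annihilator_eq_top_iff.mp h), ?_⟩
  intro r s t hr ⟨i, hs⟩ ht hrst
  have hsrt : s * (r * t) ∈ S.annihilator := by rwa [mul_left_comm, ← mul_assoc]
  rcases hS_absorbing r t hr ht _ (isGradedSubmodule_torsionBy 𝒜 ℳ hs)
      (Submodule.smul_le_torsionBy_iff.mpr hsrt) with hr' | ht' | hrt
  · exact Or.inl (mul_comm s r ▸ Submodule.smul_le_torsionBy_iff.mp hr')
  · exact Or.inr (Or.inr ⟨1, one_pos, by simpa using Submodule.smul_le_torsionBy_iff.mp ht'⟩)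
  · exact Or.inr (Or.inl hrt)
end

section
/- Let S be a gr-C-2^A-secondary submodule of M. Then for every homogeneous element r ∈ Γ with r ∉ Gr(Ann_Γ(S)), one has rS = r²S. -/
open Pointwise DirectSum

section GradedSubmodule

variable {G Γ M : Type*} [AddGroup G] [DecidableEq G] [CommRing Γ] [AddCommGroup M] [Module Γ M]
  {𝒜 : G → AddSubgroup Γ} {ℳ : G → AddSubgroup M} [DirectSum.Decomposition ℳ]
  [SetLike.GradedSMul 𝒜 ℳ]

theorem DirectSum.decompose_smul_of_mem {a : Γ} {i : G} (ha : a ∈ 𝒜 i) (x : M) (j : G) :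
    (decompose ℳ (a • x) (i + j) : M) = a • (decompose ℳ x j : M) := by
  induction x using DirectSum.Decomposition.inductionOn ℳ with
  | zero => simp
  | @homogeneous k m =>
    have hm : a • (m : M) ∈ ℳ (i + k) := SetLike.GradedSMul.smul_mem ha m.2
    by_cases hkj : k = j
    · subst hkj
      rw [decompose_of_mem_same ℳ m.2, decompose_of_mem_same ℳ hm]
    · rw [decompose_of_mem_ne ℳ m.2 hkj, decompose_of_mem_ne ℳ hm (by simpa using hkj),
        smul_zero]
  | add x y hx hy =>
    simp only [smul_add, decompose_add, add_apply, AddSubgroup.coe_add, hx, hy]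

theorem IsGradedSubmodule.pointwise_smul {S : Submodule Γ M} (hS : IsGradedSubmodule ℳ S)
    {a : Γ} (ha : SetLike.IsHomogeneousElem 𝒜 a) : IsGradedSubmodule ℳ (a • S) := by
  obtain ⟨i, hai⟩ := ha
  intro g x hx
  obtain ⟨m, hm, rfl⟩ := (Submodule.mem_smul_pointwise_iff_exists _ _ _).mp hx
  rw [← add_neg_cancel_left i g, DirectSum.decompose_smul_of_mem hai]
  exact Submodule.smul_mem_pointwise_smul _ _ _ (hS _ hm)

end GradedSubmodule

theorem Submodule.mul_self_smul_le_smul {Γ M : Type*} [CommSemiring Γ] [AddCommMonoid M]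
    [Module Γ M] (r : Γ) (S : Submodule Γ M) : (r * r) • S ≤ r • S := by
  rw [mul_smul]
  exact Submodule.map_mono (Submodule.smul_le_self_of_tower r S)

theorem grMem_of_grMem_mul_self {Γ : Type*} [CommRing Γ] {I : Ideal Γ} {r : Γ}
    (h : grMem I (r * r)) : grMem I r := by
  obtain ⟨n, hn, hrn⟩ := h
  exact ⟨n + n, by omega, by rwa [pow_add, ← mul_pow]⟩

variable {G : Type*} [AddGroup G] [DecidableEq G]
variable {Γ : Type*} [CommRing Γ]
variable {M : Type*} [AddCommGroup M] [Module Γ M]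
variable (𝒜 : G → AddSubgroup Γ) (ℳ : G → AddSubgroup M)
variable [GradedRing 𝒜] [DirectSum.Decomposition ℳ] [SetLike.GradedSMul 𝒜 ℳ]

/-- If `S` is a gr-C-2^A-secondary submodule of `M`, then `r • S = r² • S` for every
homogeneous `r` not in `Gr(Ann S)`. -/
theorem stmt7 (S : Submodule Γ M) (hS : IsGrC2ASecondary 𝒜 ℳ S)
    (r : Γ) (hr : SetLike.IsHomogeneousElem 𝒜 r) (hr' : ¬ grMem S.annihilator r) :
    r • S = (r ^ 2) • S := by
  obtain ⟨-, hSg, absorbing⟩ := hS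
  rw [sq]
  rcases absorbing r r hr hr _ (hSg.pointwise_smul (hr.mul hr)) le_rfl with h | h | h
  · exact le_antisymm h (Submodule.mul_self_smul_le_smul r S)
  · exact le_antisymm h (Submodule.mul_self_smul_le_smul r S)
  · exact absurd (grMem_of_grMem_mul_self h) hr'
end

section
/- Let M be a gr-multiplication Γ-module which is a gr-C-2^A-secondary module (i.e., M is a gr-C-2^A-secondary submodule of itself). Then every nonzero graded submodule of M is a gr-C-2^A-secondary submodule of M. -/
/-!
Write `S = K • M` with `K` a graded ideal. For a graded submodule `L`, the residual
`(L :_M K) = {m | K m ⊆ L}` is again graded, and `t • S ⊆ L` holds exactly when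
`t • M ⊆ (L :_M K)`. So the defining property of `M`, applied to the residual, transfers
to `S`; the radical alternative transfers because `Ann M ⊆ Ann S`.
-/

open Pointwise DirectSum

section Residual

variable {R M : Type*} [CommRing R] [AddCommGroup M] [Module R M]

def Submodule.residual (L : Submodule R M) (K : Ideal R) : Submodule R M :=
  ⨅ k ∈ K, L.comap (DistribSMul.toLinearMap R M k)

theorem Submodule.mem_residual {L : Submodule R M} {K : Ideal R} {m : M} :
    m ∈ L.residual K ↔ ∀ k ∈ K, k • m ∈ L := by
  simp [Submodule.residual, Submodule.mem_iInf]

theorem Submodule.smul_le_residual_iff {L N : Submodule R M} {K : Ideal R} {t : R} :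
    t • N ≤ L.residual K ↔ t • (K • N) ≤ L := by
  simp only [Submodule.pointwise_smul_def, Submodule.map_le_iff_le_comap, Submodule.smul_le]
  refine ⟨fun h k hk n hn => ?_, fun h n hn => Submodule.mem_residual.2 fun k hk => ?_⟩
  · simpa [smul_comm t k n] using Submodule.mem_residual.1 (h hn) k hk
  · simpa [smul_comm k t n] using h k hk n hn

end Residual

theorem grMem_mono {R : Type*} [CommRing R] {I J : Ideal R} (hIJ : I ≤ J) {x : R}
    (hx : grMem I x) : grMem J x :=
  let ⟨n, hn, hxn⟩ := hx
  ⟨n, hn, hIJ hxn⟩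

theorem coe_decompose_smul_of_mem {ι R M : Type*} [DecidableEq ι] [AddLeftCancelMonoid ι]
    [Ring R] [AddCommGroup M] [Module R M]
    (𝒜 : ι → AddSubgroup R) (ℳ : ι → AddSubgroup M) [Decomposition ℳ] [SetLike.GradedSMul 𝒜 ℳ]
    {i : ι} {k : R} (hk : k ∈ 𝒜 i) (m : M) (j : ι) :
    (decompose ℳ (k • m) (i + j) : M) = k • (decompose ℳ m j : M) := by
  induction m using DirectSum.Decomposition.inductionOn ℳ with
  | zero => simp
  | @homogeneous l m =>
      obtain ⟨m, hm⟩ := m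
      have hkm : k • m ∈ ℳ (i + l) := SetLike.GradedSMul.smul_mem hk hm
      by_cases hlj : l = j
      · subst hlj
        rw [decompose_of_mem_same ℳ hm, decompose_of_mem_same ℳ hkm]
      · rw [decompose_of_mem_ne ℳ hm hlj, decompose_of_mem_ne ℳ hkm (by simpa using hlj),
          smul_zero]
  | add x y hx hy =>
      simp only [smul_add, decompose_add, DirectSum.add_apply, AddSubgroup.coe_add, hx, hy]

section Graded

variable {ι R M : Type*} [DecidableEq ι] [AddGroup ι] [CommRing R] [AddCommGroup M] [Module R M]
variable {𝒜 : ι → AddSubgroup R} {ℳ : ι → AddSubgroup M} [GradedRing 𝒜]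

theorem IsGradedIdeal.smul_mem_of_forall_homogeneous {K : Ideal R} (hK : IsGradedIdeal 𝒜 K)
    {L : Submodule R M} {m : M} (h : ∀ k ∈ K, SetLike.IsHomogeneousElem 𝒜 k → k • m ∈ L) :
    ∀ k ∈ K, k • m ∈ L := by
  classical
  intro k hk
  rw [← sum_support_decompose 𝒜 k, Finset.sum_smul]
  exact Submodule.sum_mem _ fun i _ => h _ (hK i hk) ⟨i, SetLike.coe_mem _⟩

variable [Decomposition ℳ] [SetLike.GradedSMul 𝒜 ℳ]

theorem IsGradedSubmodule.residual {L : Submodule R M} (hL : IsGradedSubmodule ℳ L)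
    {K : Ideal R} (hK : IsGradedIdeal 𝒜 K) : IsGradedSubmodule ℳ (L.residual K) := by
  intro j m hm
  rw [Submodule.mem_residual] at hm ⊢
  refine hK.smul_mem_of_forall_homogeneous fun k hk ⟨i, hki⟩ => ?_
  rw [← coe_decompose_smul_of_mem 𝒜 ℳ hki]
  exact hL _ (hm k hk)

end Graded

variable {G : Type*} [AddGroup G] [DecidableEq G]
variable {Γ : Type*} [CommRing Γ]
variable {M : Type*} [AddCommGroup M] [Module Γ M]
variable (𝒜 : G → AddSubgroup Γ) (ℳ : G → AddSubgroup M)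
variable [GradedRing 𝒜] [DirectSum.Decomposition ℳ] [SetLike.GradedSMul 𝒜 ℳ]

/-- If `M` is a gr-multiplication module which is gr-C-2^A-secondary (as a submodule of
itself), then every nonzero graded submodule of `M` is a gr-C-2^A-secondary submodule. -/
theorem stmt10
    (hmul : ∀ N : Submodule Γ M, IsGradedSubmodule ℳ N →
      ∃ K : Ideal Γ, IsGradedIdeal 𝒜 K ∧ N = K • (⊤ : Submodule Γ M))
    (hM : IsGrC2ASecondary 𝒜 ℳ (⊤ : Submodule Γ M)) :
    ∀ S : Submodule Γ M, S ≠ ⊥ → IsGradedSubmodule ℳ S →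
      IsGrC2ASecondary 𝒜 ℳ S := by
  intro S hS hSgr
  obtain ⟨K, hK, rfl⟩ := hmul S hSgr
  refine ⟨hS, hSgr, fun r s hr hs L hL hrs => ?_⟩
  simp only [← Submodule.smul_le_residual_iff] at hrs ⊢
  exact (hM.2.2 r s hr hs _ (hL.residual hK) hrs).imp_right
    (Or.imp_right (grMem_mono (Submodule.annihilator_mono le_top)))
end

section
/- Let M and M' be G-graded Γ-modules and let ψ : M → M' be a graded Γ-monomorphism, i.e., an injective Γ-linear map with ψ(M_g) ⊆ M'_g for all g ∈ G. Let S' be a nonzero graded submodule of M' contained in the image ψ(M), and suppose S' is a gr-C-2^A-secondary submodule of ψ(M), i.e., for all homogeneous r, s ∈ Γ and every graded submodule L' of M' contained in ψ(M), rsS' ⊆ L' implies rS' ⊆ L' or sS' ⊆ L' or rs ∈ Gr(Ann_Γ(S')). Then ψ⁻¹(S') is a gr-C-2^A-secondary submodule of M. -/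
/-! Since `ψ` is injective and `S' ⊆ ψ(M)`, we have `S' = ψ(ψ⁻¹ S')`, and `L ↦ ψ(L)` carries
graded submodules of `M` to graded submodules of `M'` inside `ψ(M)`. It reflects inclusions,
commutes with `r •` and preserves annihilators, so each clause of the condition for `S'`
and `ψ(L)` pulls back to the corresponding clause for `ψ⁻¹ S'` and `L`. -/

open Pointwise DirectSum

variable {G : Type*} [AddGroup G] [DecidableEq G]
variable {Γ : Type*} [CommRing Γ]
variable {M : Type*} [AddCommGroup M] [Module Γ M]
variable {M' : Type*} [AddCommGroup M'] [Module Γ M']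
variable (𝒜 : G → AddSubgroup Γ) (ℳ : G → AddSubgroup M) (ℳ' : G → AddSubgroup M')
variable [GradedRing 𝒜] [DirectSum.Decomposition ℳ] [SetLike.GradedSMul 𝒜 ℳ]
variable [DirectSum.Decomposition ℳ'] [SetLike.GradedSMul 𝒜 ℳ']

namespace Submodule

variable {R : Type*} [CommSemiring R] {N : Type*} [AddCommMonoid N] [Module R N]
  {N' : Type*} [AddCommMonoid N'] [Module R N'] {f : N →ₗ[R] N'}

theorem smul_map_le_map_iff (hf : Function.Injective f) {r : R} {P Q : Submodule R N} :
    r • P.map f ≤ Q.map f ↔ r • P ≤ Q := by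
  rw [← map_pointwise_smul, map_le_map_iff_of_injective hf]

theorem annihilator_map_of_injective (hf : Function.Injective f) (P : Submodule R N) :
    (P.map f).annihilator = P.annihilator :=
  (P.equivMapOfInjective f hf).annihilator_eq.symm

end Submodule

theorem map_directSumDecompose_of_forall_mem {ι : Type*} [DecidableEq ι]
    {N N' σ σ' F : Type*} [AddCommMonoid N] [AddCommMonoid N']
    [SetLike σ N] [AddSubmonoidClass σ N] [SetLike σ' N'] [AddSubmonoidClass σ' N']
    {𝒩 : ι → σ} {𝒩' : ι → σ'} [DirectSum.Decomposition 𝒩] [DirectSum.Decomposition 𝒩']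
    [FunLike F N N'] [AddMonoidHomClass F N N'] (f : F) (hf : ∀ i x, x ∈ 𝒩 i → f x ∈ 𝒩' i)
    (x : N) (i : ι) : f (decompose 𝒩 x i) = decompose 𝒩' (f x) i := by
  induction x using DirectSum.Decomposition.inductionOn 𝒩 with
  | zero => simp
  | @homogeneous j y =>
    obtain rfl | hne := eq_or_ne j i
    · rw [decompose_of_mem_same 𝒩' (hf j y y.2), decompose_of_mem_same 𝒩 y.2]
    · rw [decompose_of_mem_ne 𝒩' (hf j y y.2) hne, decompose_of_mem_ne 𝒩 y.2 hne, map_zero]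
  | add a b ha hb =>
    simp only [map_add, decompose_add, DirectSum.add_apply, AddMemClass.coe_add, ha, hb]

section GradedSubmodule

variable {ι : Type*} [DecidableEq ι] {R : Type*} [CommRing R]
  {N : Type*} [AddCommGroup N] [Module R N] {N' : Type*} [AddCommGroup N'] [Module R N']
  {𝒩 : ι → AddSubgroup N} {𝒩' : ι → AddSubgroup N'}
  [DirectSum.Decomposition 𝒩] [DirectSum.Decomposition 𝒩']
  (f : N →ₗ[R] N') (hf : ∀ i x, x ∈ 𝒩 i → f x ∈ 𝒩' i)
include hf

theorem IsGradedSubmodule.comap {P : Submodule R N'} (hP : IsGradedSubmodule 𝒩' P) :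
    IsGradedSubmodule 𝒩 (P.comap f) := fun i x hx ↦ by
  rw [Submodule.mem_comap, map_directSumDecompose_of_forall_mem f hf]
  exact hP i hx

theorem IsGradedSubmodule.map {P : Submodule R N} (hP : IsGradedSubmodule 𝒩 P) :
    IsGradedSubmodule 𝒩' (P.map f) := by
  rintro i _ ⟨x, hx, rfl⟩
  rw [← map_directSumDecompose_of_forall_mem f hf]
  exact ⟨_, hP i hx, rfl⟩

end GradedSubmodule

/-- If `ψ : M → M'` is a graded monomorphism and `S'` is a gr-C-2^A-secondary submodule
of `ψ(M)` (a nonzero graded submodule of `M'` contained in the image of `ψ`, satisfying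
the gr-C-2^A-secondary condition with respect to graded submodules of `M'` contained in
`ψ(M)`), then `ψ⁻¹(S')` is a gr-C-2^A-secondary submodule of `M`. -/
theorem stmt12 (ψ : M →ₗ[Γ] M') (hinj : Function.Injective ψ)
    (hgr : ∀ (g : G) (x : M), x ∈ ℳ g → ψ x ∈ ℳ' g)
    (S' : Submodule Γ M') (hS'0 : S' ≠ ⊥) (hS'g : IsGradedSubmodule ℳ' S')
    (hle : S' ≤ LinearMap.range ψ)
    (hsec : ∀ r s : Γ, SetLike.IsHomogeneousElem 𝒜 r → SetLike.IsHomogeneousElem 𝒜 s →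
      ∀ L' : Submodule Γ M', IsGradedSubmodule ℳ' L' → L' ≤ LinearMap.range ψ →
        (r * s) • S' ≤ L' →
          r • S' ≤ L' ∨ s • S' ≤ L' ∨ grMem S'.annihilator (r * s)) :
    IsGrC2ASecondary 𝒜 ℳ (S'.comap ψ) := by
  obtain ⟨S, rfl⟩ : ∃ S, S.map ψ = S' :=
    ⟨S'.comap ψ, by rw [Submodule.map_comap_eq, inf_eq_right.2 hle]⟩
  have hSg : IsGradedSubmodule ℳ S := by
    simpa only [Submodule.comap_map_eq_of_injective hinj] using hS'g.comap ψ hgr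
  rw [Submodule.comap_map_eq_of_injective hinj]
  refine ⟨fun h ↦ hS'0 (by rw [h, Submodule.map_bot]), hSg, ?_⟩
  intro r s hr hs L hL hrs
  have := hsec r s hr hs (L.map ψ) (hL.map ψ hgr) LinearMap.map_le_range
    ((Submodule.smul_map_le_map_iff hinj).2 hrs)
  simpa only [Submodule.smul_map_le_map_iff hinj,
    Submodule.annihilator_map_of_injective hinj] using this
end
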